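/- arXiv:1912.03843 — 5 statements merged into one kernel-verified Lean document; each statement's English description precedes it below -/
import Mathlib

section
/- (Basic perturbation for contractible objects) Let X be a cochain complex with h₀ ∈ End^{−1}(X) satisfying d(h₀) = id_X (so X is contractible). Let α be a degree-1 Maurer–Cartan endomorphism (d(α) + α² = 0) such that id_X + α∘h₀ is invertible in End^0(X). Then h := h₀ ∘ (id_X + α∘h₀)^{−1} satisfies d(h) + α∘h + h∘α = id_X, i.e., h is a contracting homotopy for the twisted complex (X, δ+α). -/
open CategoryTheory CochainComplex CochainComplex.HomComplex

/-- basic perturbation for contractible objects.  Let `X` be a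
cochain complex with `h₀ ∈ End^{-1}(X)` satisfying `d(h₀) = id_X`, and let `α` be
a degree-1 Maurer–Cartan endomorphism (`d(α) + α² = 0`) such that
`id_X + α∘h₀` is invertible in `End^0(X)`, with (two-sided) inverse `u`.  Then
`h := h₀ ∘ (id_X + α∘h₀)^{-1}` satisfies `d(h) + α∘h + h∘α = id_X`, i.e. `h` is a
contracting homotopy for the twisted complex `(X, δ + α)`.
(Composition is written diagrammatically: `α∘h₀ = h₀.comp α`.) -/
theorem basic_perturbation_contractible
    {k : Type*} [CommRing k]
    (X : CochainComplex (ModuleCat k) ℤ)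
    (h₀ : Cochain X X (-1)) (hh₀ : δ (-1) 0 h₀ = Cochain.ofHom (𝟙 X))
    (α : Cochain X X 1) (hα : δ 1 2 α + α.comp α (by ring) = 0)
    (u : Cochain X X 0)
    (hu₁ : (Cochain.ofHom (𝟙 X) + h₀.comp α (by ring)).comp u (by ring)
        = Cochain.ofHom (𝟙 X))
    (hu₂ : u.comp (Cochain.ofHom (𝟙 X) + h₀.comp α (by ring)) (by ring)
        = Cochain.ofHom (𝟙 X))
    (h : Cochain X X (-1)) (hdef : h = u.comp h₀ (by ring)) :
    δ (-1) 0 h + h.comp α (by ring) + α.comp h (by ring) = Cochain.ofHom (𝟙 X) := by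
  set A : Cochain X X 0 := Cochain.ofHom (𝟙 X) + h₀.comp α (by ring) with hA
  have hδα : δ 1 2 α = -α.comp α (show (1:ℤ)+1 = 2 by norm_num) := by
    rw [eq_neg_iff_add_eq_zero]; exact hα
  have hδA : δ 0 1 A = -(A.comp α (show (0:ℤ)+1 = 1 by norm_num)) := by
    rw [hA, δ_add, δ_ofHom, zero_add,
        δ_comp h₀ α (show (-1:ℤ)+1 = 0 by norm_num) 0 2 1
          (show (0:ℤ)+1 = 1 by norm_num) (show (-1:ℤ)+1 = 0 by norm_num)
          (show (1:ℤ)+1 = 2 by norm_num), hh₀, hδα,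
        Cochain.add_comp, Cochain.id_comp, Cochain.comp_neg]
    simp only [Int.negOnePow_one, Units.neg_smul, one_smul]
    rw [Cochain.comp_assoc h₀ α α (show (-1:ℤ)+1 = 0 by norm_num)
      (show (1:ℤ)+1 = 2 by norm_num) (show (-1:ℤ)+1+1 = 1 by norm_num)]
    abel
  have hδuA : (δ 0 1 u).comp A (show (1:ℤ)+0 = 1 by norm_num) = α := by
    have e := δ_comp_zero_cochain u A 1 rfl
    rw [hu₂, δ_ofHom, hδA, Cochain.comp_neg,
      ← Cochain.comp_assoc_of_first_is_zero_cochain, hu₂, Cochain.id_comp] at e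
    exact (neg_add_eq_zero.mp e.symm).symm
  have hδu : δ 0 1 u = α.comp u (show (1:ℤ)+0 = 1 by norm_num) := by
    calc δ 0 1 u
        = (δ 0 1 u).comp (A.comp u (show (0:ℤ)+0 = 0 by norm_num))
            (show (1:ℤ)+0 = 1 by norm_num) := by
          rw [hu₁, Cochain.comp_id]
      _ = ((δ 0 1 u).comp A (show (1:ℤ)+0 = 1 by norm_num)).comp u
            (show (1:ℤ)+0 = 1 by norm_num) := by
          rw [Cochain.comp_assoc (δ 0 1 u) A u (show (1:ℤ)+0 = 1 by norm_num)
            (show (0:ℤ)+0 = 0 by norm_num) (show (1:ℤ)+0+0 = 1 by norm_num)]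
      _ = α.comp u (show (1:ℤ)+0 = 1 by norm_num) := by rw [hδuA]
  have hδh : δ (-1) 0 h = u - α.comp h (show (1:ℤ)+(-1) = 0 by norm_num) := by
    rw [hdef, δ_zero_cochain_comp u h₀ 0 (show (-1:ℤ)+1 = 0 by norm_num), hh₀,
      Cochain.comp_id, hδu]
    simp only [Int.negOnePow_neg, Int.negOnePow_one, Units.neg_smul, one_smul, inv_neg]
    rw [Cochain.comp_assoc α u h₀ (show (1:ℤ)+0 = 1 by norm_num)
      (show (0:ℤ)+(-1) = -1 by norm_num) (show (1:ℤ)+0+(-1) = 0 by norm_num), ← hdef]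
    abel
  have hha : h.comp α (show (-1:ℤ)+1 = 0 by norm_num)
      = u.comp (h₀.comp α (show (-1:ℤ)+1 = 0 by norm_num))
          (show (0:ℤ)+0 = 0 by norm_num) := by
    rw [hdef, Cochain.comp_assoc u h₀ α (show (0:ℤ)+(-1) = -1 by norm_num)
      (show (-1:ℤ)+1 = 0 by norm_num) (show (0:ℤ)+(-1)+1 = 0 by norm_num)]
  have key : u + u.comp (h₀.comp α (show (-1:ℤ)+1 = 0 by norm_num))
      (show (0:ℤ)+0 = 0 by norm_num) = Cochain.ofHom (𝟙 X) := by
    rw [← hu₂, hA, Cochain.comp_add, Cochain.comp_id]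
  rw [hδh, hha, ← key]
  abel
end

section
/- (Catalan strong contracting homotopy) Let X be a cochain complex over k and h₀ ∈ End^{−1}(X) with d(h₀) = id_X. Let ε be a formal variable of degree 2 and define h(ε) := Σ_{l≥0} (−1)^l C_l ε^l h₀^{2l+1}, where C_l are the Catalan numbers. Then d(h(ε)) + ε·h(ε)² = id_X (as an identity of formal power series in ε with coefficients in End(X)). Hence h(ε) is a strong contracting homotopy for X. -/
open CategoryTheory CochainComplex CochainComplex.HomComplex

noncomputable section

variable {R : Type*} [CommRing R]

/-- A formal power series in a degree-2 variable `ε` of total degree `d`: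
the coefficient of `ε^i` is a cochain of degree `d - 2i`. -/
abbrev SHom (X Y : CochainComplex (ModuleCat R) ℤ) (d : ℤ) :=
  ∀ i : ℕ, Cochain X Y (d - 2 * (i : ℤ))

variable {X Y Z : CochainComplex (ModuleCat R) ℤ} {d d₁ d₂ d₃ e : ℤ}

/-- The differential, applied coefficientwise (intended for `e = d + 1`,
following the convention of `CochainComplex.HomComplex.δ`). -/
def sδ (d e : ℤ) (a : SHom X Y d) : SHom X Y e :=
  fun i => δ (d - 2 * (i : ℤ)) (e - 2 * (i : ℤ)) (a i)

/-- Composition (written diagrammatically) of formal series, by convolution. -/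
def sComp (a : SHom X Y d₁) (b : SHom Y Z d₂) (h : d₁ + d₂ = d₃) : SHom X Z d₃ :=
  fun n => ∑ i ∈ (Finset.range (n + 1)).attach,
    (a i.1).comp (b (n - i.1))
      (by have hi := i.2; rw [Finset.mem_range] at hi; omega)

/-- The identity, as a formal series. -/
def sOne (X : CochainComplex (ModuleCat R) ℤ) : SHom X X 0 :=
  fun i => if h : i = 0 then
    (Cochain.ofHom (𝟙 X)).comp (Cochain.ofHom (𝟙 X)) (by omega) else 0

/-- A single cochain, viewed as a constant formal series. -/
def sSingle (z : Cochain X Y d) : SHom X Y d :=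
  fun i => if h : i = 0 then z.comp (Cochain.ofHom (𝟙 Y)) (by omega) else 0

/-- Multiplication by `ε` (which has degree `2`). -/
def sEps (a : SHom X Y d) (h : d + 2 = e) : SHom X Y e :=
  fun n => if hn : n = 0 then 0
    else (a (n - 1)).comp (Cochain.ofHom (𝟙 Y)) (by omega)

/-- Iterated composition `h₀^m` of a degree `-1` endomorphism. -/
def cpow (h₀ : Cochain X X (-1)) : (m : ℕ) → Cochain X X (-(m : ℤ))
  | 0 => (Cochain.ofHom (𝟙 X)).comp (Cochain.ofHom (𝟙 X)) (by omega)
  | (m + 1) => h₀.comp (cpow h₀ m) (by push_cast; ring)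

/-! ### Auxiliary lemmas -/

lemma sum_v' {n : ℤ} {ι : Type*} (s : Finset ι)
    (f : ι → Cochain X Y n) (p q : ℤ) (hpq : p + n = q) :
    (∑ i ∈ s, f i).v p q hpq = ∑ i ∈ s, (f i).v p q hpq :=
  map_sum (AddMonoidHom.mk' (fun z => Cochain.v z p q hpq) (fun _ _ => rfl)) f s

lemma zsmul_v' {n : ℤ} (c : ℤ) (z : Cochain X Y n) (p q : ℤ) (hpq : p + n = q) :
    (c • z).v p q hpq = c • (z.v p q hpq) := rfl

lemma δ_zsmul' {n m : ℤ} (c : ℤ) (z : Cochain X Y n) :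
    δ n m (c • z) = c • δ n m z :=
  map_zsmul (δ_hom R X Y n m) c z

lemma cpow_congr' (h₀ : Cochain X X (-1)) {a b : ℕ} (hab : a = b) (p q : ℤ)
    (hpq : p + (-(a : ℤ)) = q) :
    (cpow h₀ a).v p q hpq = (cpow h₀ b).v p q (by subst hab; exact hpq) := by
  subst hab; rfl

lemma cpow_comp_v' (h₀ : Cochain X X (-1)) (a b : ℕ) {c : ℤ}
    (hc : (-(a : ℤ)) + (-(b : ℤ)) = c) (p q : ℤ) (hpq : p + c = q) :
    ((cpow h₀ a).comp (cpow h₀ b) hc).v p q hpq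
      = (cpow h₀ (a + b)).v p q (by push_cast; omega) := by
  induction a generalizing c p q with
  | zero =>
    rw [Cochain.comp_v _ _ hc p p q (by simp) (by push_cast at hc ⊢; omega)]
    conv_lhs => rw [cpow]
    rw [Cochain.comp_v _ _ _ p p p (by simp) (by simp), Cochain.ofHom_v]
    rw [cpow_congr' h₀ (Nat.zero_add b).symm]
    simp
  | succ a ih =>
    rw [cpow_congr' h₀ (show a + 1 + b = (a + b) + 1 from by omega)]
    simp only [cpow]
    rw [Cochain.comp_v _ _ hc p (p - (a:ℤ) - 1) q (by push_cast; omega)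
        (by push_cast at hc ⊢; omega),
      Cochain.comp_v _ _ _ p (p-1) (p - (a:ℤ) - 1) (by omega) (by push_cast; omega),
      Cochain.comp_v _ _ _ p (p-1) q (by omega) (by push_cast; omega),
      Category.assoc,
      ← Cochain.comp_v (cpow h₀ a) (cpow h₀ b) rfl (p-1) (p - (a:ℤ) - 1) q
        (by push_cast; omega) (by push_cast at hc ⊢; omega),
      ih]

lemma cpow_v_comp_v' (h₀ : Cochain X X (-1)) (a b : ℕ) (p m q : ℤ)
    (hpm : p + (-(a : ℤ)) = m) (hmq : m + (-(b : ℤ)) = q) :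
    (cpow h₀ a).v p m hpm ≫ (cpow h₀ b).v m q hmq
      = (cpow h₀ (a + b)).v p q (by push_cast; omega) := by
  rw [← Cochain.comp_v (cpow h₀ a) (cpow h₀ b) rfl p m q hpm (by omega),
    cpow_comp_v']

lemma cpow_congr2 (h₀ : Cochain X X (-1)) {a b : ℕ} (hab : a = b) :
    cpow h₀ a = (show ((-(b:ℤ)) = (-(a:ℤ))) from by rw [hab]) ▸ cpow h₀ b := by
  subst hab; rfl

lemma d_cpow' (h₀ : Cochain X X (-1)) (hh₀ : δ (-1) 0 h₀ = Cochain.ofHom (𝟙 X)) (k : ℕ) :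
    (∀ m : ℤ, δ (-(2 * k : ℕ) : ℤ) m (cpow h₀ (2 * k)) = 0) ∧
    δ (-((2 * k + 1 : ℕ)) : ℤ) (-(2 * k : ℕ) : ℤ) (cpow h₀ (2 * k + 1)) = cpow h₀ (2 * k) := by
  induction k with
  | zero =>
    have heven : ∀ m : ℤ, δ (-(2 * 0 : ℕ) : ℤ) m (cpow h₀ (2 * 0)) = 0 := by
      intro m
      by_cases hm : (-(2 * 0 : ℕ) : ℤ) + 1 = m
      · rw [show cpow h₀ (2 * 0) = (Cochain.ofHom (𝟙 X)).comp (Cochain.ofHom (𝟙 X))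
            (by omega) from rfl,
          δ_comp (Cochain.ofHom (𝟙 X)) (Cochain.ofHom (𝟙 X)) _ 1 1 m hm (by omega) (by omega)]
        simp
      · rw [δ_shape _ _ hm]
    refine ⟨heven, ?_⟩
    rw [show cpow h₀ (2 * 0 + 1) = h₀.comp (cpow h₀ (2 * 0)) (by omega) from rfl,
      δ_comp h₀ (cpow h₀ (2 * 0)) _ 0 ((-(2 * 0 : ℕ) : ℤ) + 1) _
        (by omega) (by omega) (by omega),
      heven, hh₀, Cochain.comp_zero, Cochain.id_comp]
    simp
  | succ k ih =>
    have heven : ∀ m : ℤ, δ (-(2 * (k + 1) : ℕ) : ℤ) m (cpow h₀ (2 * (k + 1))) = 0 := by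
      intro m
      by_cases hm : (-(2 * (k + 1) : ℕ) : ℤ) + 1 = m
      · have hunf : cpow h₀ (2 * (k + 1)) = h₀.comp (cpow h₀ (2 * k + 1))
            (by push_cast; ring) := by
          rw [cpow_congr2 h₀ (show 2 * (k + 1) = (2 * k + 1) + 1 from by omega)]
          rfl
        rw [hunf, δ_comp h₀ (cpow h₀ (2 * k + 1)) _ 0 (-(2 * k : ℕ) : ℤ) m hm
            (by omega) (by push_cast; omega), ih.2, hh₀]
        have hneg : (-((2 * k + 1 : ℕ) : ℤ)).negOnePow = -1 := by
          rw [show (-((2 * k + 1 : ℕ) : ℤ)) = 2 * (-(k : ℤ) - 1) + 1 from by push_cast; ring,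
            Int.negOnePow_two_mul_add_one]
        rw [hneg]
        ext p q hpq
        rw [Cochain.add_v,
          Cochain.comp_v _ _ _ p (p - 1) q (by omega) (by push_cast at hpq ⊢; omega),
          Cochain.units_smul_v,
          Cochain.comp_v _ _ _ p p q (by omega) (by push_cast at hpq ⊢; omega),
          Cochain.ofHom_v]
        conv_lhs => rw [cpow]
        rw [Cochain.comp_v _ _ _ p (p - 1) q (by omega) (by push_cast at hpq ⊢; omega)]
        simp
      · rw [δ_shape _ _ hm]
    refine ⟨heven, ?_⟩
    rw [show cpow h₀ (2 * (k + 1) + 1) = h₀.comp (cpow h₀ (2 * (k + 1)))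
        (by push_cast; ring) from rfl,
      δ_comp h₀ (cpow h₀ (2 * (k + 1))) _ 0 ((-(2 * (k + 1) : ℕ) : ℤ) + 1) _
        (by push_cast; omega) (by omega) (by omega),
      heven, hh₀, Cochain.comp_zero, Cochain.id_comp]
    have : (-((2 * (k + 1) : ℕ) : ℤ)).negOnePow = 1 := by
      rw [show (-((2 * (k + 1) : ℕ) : ℤ)) = 2 * (-(k : ℤ) - 1) from by push_cast; ring,
        Int.negOnePow_two_mul]
    rw [this]
    simp

/-- Catalan strong contracting homotopy.  Let `X` be a cochain
complex and `h₀ ∈ End^{-1}(X)` with `d(h₀) = id_X`.  Define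
`h(ε) := Σ_{l ≥ 0} (−1)^l C_l ε^l h₀^{2l+1}` where `C_l` are the Catalan numbers.
Then `d(h(ε)) + ε·h(ε)² = id_X` as an identity of formal power series in `ε` with
coefficients in `End(X)`; hence `h(ε)` is a strong contracting homotopy for `X`. -/
theorem catalan_strong_contracting_homotopy
    (X : CochainComplex (ModuleCat R) ℤ)
    (h₀ : Cochain X X (-1)) (hh₀ : δ (-1) 0 h₀ = Cochain.ofHom (𝟙 X))
    (h : SHom X X (-1))
    (hdef : ∀ l : ℕ, h l = ((-1 : ℤ) ^ l * catalan l) •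
      ((cpow h₀ (2 * l + 1)).comp (Cochain.ofHom (𝟙 X)) (by omega))) :
    sδ (-1) 0 h + sEps (sComp h h (show (-1 : ℤ) + (-1) = -2 by ring)) (by ring)
      = sOne X := by
  have hA : ∀ n : ℕ, sδ (-1) 0 h n = ((-1 : ℤ) ^ n * catalan n) •
      ((cpow h₀ (2 * n)).comp (Cochain.ofHom (𝟙 X)) (by push_cast; omega) :
        Cochain X X (0 - 2 * (n : ℤ))) := by
    intro n
    show δ ((-1) - 2 * (n : ℤ)) (0 - 2 * (n : ℤ)) (h n) = _
    rw [hdef n, δ_zsmul',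
      δ_comp (cpow h₀ (2 * n + 1)) (Cochain.ofHom (𝟙 X)) _ (-(2 * n : ℕ) : ℤ) 1
        (0 - 2 * (n : ℤ)) (by push_cast; omega) (by push_cast; omega) (by omega),
      δ_ofHom, Cochain.comp_zero, (d_cpow' h₀ hh₀ n).2]
    simp
  funext n
  rw [Pi.add_apply, hA n]
  cases n with
  | zero =>
    rw [show sEps (sComp h h (show (-1 : ℤ) + (-1) = -2 by ring))
        (by ring : (-2 : ℤ) + 2 = 0) 0 = 0 from dif_pos rfl,
      show sOne X 0 = (Cochain.ofHom (𝟙 X)).comp (Cochain.ofHom (𝟙 X)) (by omega)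
        from dif_pos rfl, add_zero]
    rw [show cpow h₀ (2 * 0) = (Cochain.ofHom (𝟙 X)).comp (Cochain.ofHom (𝟙 X)) (by omega)
      from rfl]
    simp only [pow_zero, catalan_zero, Nat.cast_one, mul_one, one_smul]
    apply Cochain.ext
    intro p q hpq
    obtain rfl : p = q := by omega
    rw [Cochain.comp_v _ _ _ p p p (by omega) (by omega),
      Cochain.comp_v _ _ _ p p p (by omega) (by omega)]
    simp
  | succ n =>
    rw [show sOne X (n + 1) = 0 from dif_neg (Nat.succ_ne_zero n),
      show sEps (sComp h h (show (-1 : ℤ) + (-1) = -2 by ring))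
          (by ring : (-2 : ℤ) + 2 = 0) (n + 1)
        = (sComp h h (show (-1 : ℤ) + (-1) = -2 by ring) n).comp (Cochain.ofHom (𝟙 X))
          (by push_cast; omega) from dif_neg (Nat.succ_ne_zero n)]
    apply Cochain.ext
    intro p q hpq
    rw [Cochain.add_v, Cochain.zero_v, zsmul_v',
      Cochain.comp_v _ _ _ p q q (by push_cast at hpq ⊢; omega) (by omega), Cochain.ofHom_v,
      Cochain.comp_v _ _ _ p q q (by push_cast at hpq ⊢; omega) (by omega), Cochain.ofHom_v]
    simp only [HomologicalComplex.id_f, Category.comp_id]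
    rw [show (sComp h h (show (-1 : ℤ) + (-1) = -2 by ring) n)
        = ∑ i ∈ (Finset.range (n + 1)).attach, (h i.1).comp (h (n - i.1))
          (by have hi := i.2; rw [Finset.mem_range] at hi; omega) from rfl,
      sum_v']
    have key : ∀ (i : ℕ), i < n + 1 →
        ∀ (pf : ((-1 : ℤ) - 2 * (i : ℤ)) + ((-1 : ℤ) - 2 * ((n - i : ℕ) : ℤ))
            = (-2 : ℤ) - 2 * (n : ℤ))
          (hpq2 : p + ((-2 : ℤ) - 2 * (n : ℤ)) = q)
          (hV : p + (0 - 2 * ((n + 1 : ℕ) : ℤ)) = q),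
        ((h i).comp (h (n - i)) pf).v p q hpq2
          = (((-1 : ℤ) ^ n * ((catalan i * catalan (n - i) : ℕ) : ℤ)) •
              (cpow h₀ (2 * n + 2)).v p q (by push_cast at hV ⊢; omega)) := by
      intro i hi pf hpq2 hV
      have hi' : i ≤ n := by omega
      rw [hdef i, hdef (n - i)]
      rw [Cochain.comp_v _ _ _ p (p - 1 - 2 * (i : ℤ)) q (by push_cast; omega)
          (by push_cast at hpq ⊢; omega)]
      rw [zsmul_v', zsmul_v']
      rw [Cochain.comp_v (cpow h₀ (2 * i + 1)) (Cochain.ofHom (𝟙 X)) _ p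
          (p - 1 - 2 * (i : ℤ)) (p - 1 - 2 * (i : ℤ)) (by push_cast; omega) (by omega),
        Cochain.ofHom_v,
        Cochain.comp_v (cpow h₀ (2 * (n - i) + 1)) (Cochain.ofHom (𝟙 X)) _
          (p - 1 - 2 * (i : ℤ)) q q (by push_cast; omega) (by omega),
        Cochain.ofHom_v]
      simp only [HomologicalComplex.id_f, Category.comp_id]
      rw [Preadditive.zsmul_comp, Preadditive.comp_zsmul, smul_smul]
      rw [cpow_v_comp_v' h₀ (2 * i + 1) (2 * (n - i) + 1) p (p - 1 - 2 * (i : ℤ)) q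
          (by push_cast; omega) (by push_cast; omega)]
      rw [cpow_congr' h₀ (show (2 * i + 1) + (2 * (n - i) + 1) = 2 * n + 2 from by omega)]
      congr 1
      have hsign : (-1 : ℤ) ^ i * (-1 : ℤ) ^ (n - i) = (-1 : ℤ) ^ n := by
        rw [← pow_add, show i + (n - i) = n from by omega]
      push_cast
      rw [mul_mul_mul_comm, hsign]
    rw [Finset.sum_congr rfl
      (fun i _ => key i.1 (Finset.mem_range.mp i.2) _ _ (by push_cast at hpq ⊢; omega))]
    rw [Finset.sum_attach (Finset.range (n + 1))
      (fun i => (((-1 : ℤ) ^ n * ((catalan i * catalan (n - i) : ℕ) : ℤ)) •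
        (cpow h₀ (2 * n + 2)).v p q (by push_cast at hpq ⊢; omega)))]
    rw [← Finset.sum_smul]
    have hcat : (∑ i ∈ Finset.range (n + 1),
        ((-1 : ℤ) ^ n * ((catalan i * catalan (n - i) : ℕ) : ℤ)))
        = (-1 : ℤ) ^ n * (catalan (n + 1) : ℤ) := by
      rw [← Finset.mul_sum]
      congr 1
      rw [show ((catalan (n + 1) : ℤ)) = ((∑ i ∈ Finset.range (n + 1),
          catalan i * catalan (n - i) : ℕ) : ℤ) from by
        rw [catalan_succ, Fin.sum_univ_eq_sum_range (fun i => catalan i * catalan (n - i))]]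
      push_cast
      rfl
    rw [hcat,
      cpow_congr' h₀ (show 2 * (n + 1) = 2 * n + 2 from by omega),
      ← add_smul,
      show ((-1 : ℤ) ^ (n + 1) * (catalan (n + 1) : ℤ)
        + (-1 : ℤ) ^ n * (catalan (n + 1) : ℤ)) = 0 from by rw [pow_succ]; ring,
      zero_smul]

end
end

section
/- (Curved perturbation, F-equation) Let z be a closed central degree-2 operator on all complexes involved, and let f, g, h, k be a z-homotopy equivalence between complexes X and Y: d(f) = z(fh − kf), d(g) = z(gk − hg), d(h) = id_X − gf − zh², d(k) = id_Y − fg − zk². Let α ∈ End^1(X) satisfy d(α) + α² = z·id_X, and assume id_X + α∘h is invertible. Define F := f∘(id_X + αh)^{−1} and β := z·k + f∘α∘(id_X + hα)^{−1}∘g. Then d(F) + β∘F − F∘α = 0, i.e., F is a closed degree-zero morphism of curved twisted complexes (X, α, z·id_X) → (Y, β, z·id_Y). -/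
open CategoryTheory CochainComplex CochainComplex.HomComplex

/-- curved perturbation, `F`-equation.  Let `z` be a closed
central degree-2 operator (acting as `zX` on `X` and `zY` on `Y`), and let
`f, g, h, k` be a `z`-homotopy equivalence between the complexes `X` and `Y`:
`d(f) = z(fh − kf)`, `d(g) = z(gk − hg)`, `d(h) = id_X − gf − zh²`,
`d(k) = id_Y − fg − zk²`.  Let `α ∈ End¹(X)` satisfy `d(α) + α² = z·id_X` and
assume `id_X + α∘h` is invertible, with two-sided inverse `u`; write
`v := id_X − h∘u∘α` for the corresponding inverse of `id_X + h∘α`.  Define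
`F := f∘(id_X + αh)^{-1} = u·f` and
`β := z·k + f∘α∘(id_X + hα)^{-1}∘g`.  Then `d(F) + β∘F − F∘α = 0`, i.e. `F` is a
closed degree-zero morphism of curved twisted complexes
`(X, α, z·id_X) → (Y, β, z·id_Y)`.
(Compositions are written diagrammatically: `φ∘ψ = ψ.comp φ`.) -/
theorem curved_perturbation_F_equation
    {R : Type*} [CommRing R]
    (X Y : CochainComplex (ModuleCat R) ℤ)
    (zX : Cochain X X 2) (zY : Cochain Y Y 2)
    (hzX : δ 2 3 zX = 0) (hzY : δ 2 3 zY = 0)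
    (f : Cochain X Y 0) (g : Cochain Y X 0)
    (h : Cochain X X (-1)) (k : Cochain Y Y (-1))
    -- centrality of z
    (hcf : f.comp zY (show (0:ℤ) + 2 = 2 by ring) = zX.comp f (show (2:ℤ) + 0 = 2 by ring))
    (hcg : g.comp zX (show (0:ℤ) + 2 = 2 by ring) = zY.comp g (show (2:ℤ) + 0 = 2 by ring))
    (hch : h.comp zX (show (-1:ℤ) + 2 = 1 by ring) = zX.comp h (show (2:ℤ) + (-1) = 1 by ring))
    (hck : k.comp zY (show (-1:ℤ) + 2 = 1 by ring) = zY.comp k (show (2:ℤ) + (-1) = 1 by ring))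
    -- the z-homotopy-equivalence equations
    (hdf : δ 0 1 f = (h.comp f (show (-1:ℤ) + 0 = -1 by ring)
        - f.comp k (show (0:ℤ) + (-1) = -1 by ring)).comp zY (show (-1:ℤ) + 2 = 1 by ring))
    (hdg : δ 0 1 g = (k.comp g (show (-1:ℤ) + 0 = -1 by ring)
        - g.comp h (show (0:ℤ) + (-1) = -1 by ring)).comp zX (show (-1:ℤ) + 2 = 1 by ring))
    (hdh : δ (-1) 0 h = Cochain.ofHom (𝟙 X) - f.comp g (by ring)
        - (h.comp h (show (-1:ℤ) + (-1) = -2 by ring)).comp zX (show (-2:ℤ) + 2 = 0 by ring))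
    (hdk : δ (-1) 0 k = Cochain.ofHom (𝟙 Y) - g.comp f (by ring)
        - (k.comp k (show (-1:ℤ) + (-1) = -2 by ring)).comp zY (show (-2:ℤ) + 2 = 0 by ring))
    -- the curved Maurer–Cartan endomorphism α and centrality of z w.r.t. α
    (α : Cochain X X 1)
    (hα : δ 1 2 α + α.comp α (by ring) = zX)
    (hcα : α.comp zX (show (1:ℤ) + 2 = 3 by ring) = zX.comp α (show (2:ℤ) + 1 = 3 by ring))
    -- invertibility of id_X + α∘h
    (u : Cochain X X 0)
    (hu₁ : (Cochain.ofHom (𝟙 X) + h.comp α (by ring)).comp u (by ring) = Cochain.ofHom (𝟙 X))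
    (hu₂ : u.comp (Cochain.ofHom (𝟙 X) + h.comp α (by ring)) (by ring) = Cochain.ofHom (𝟙 X))
    (v : Cochain X X 0)
    (hv : v = Cochain.ofHom (𝟙 X)
        - α.comp (u.comp h (show (0:ℤ) + (-1) = -1 by ring)) (show (1:ℤ) + (-1) = 0 by ring))
    (F : Cochain X Y 0) (hF : F = u.comp f (by ring))
    (β : Cochain Y Y 1)
    (hβ : β = k.comp zY (show (-1:ℤ) + 2 = 1 by ring)
        + g.comp (v.comp (α.comp f (show (1:ℤ) + 0 = 1 by ring)) (show (0:ℤ) + 1 = 1 by ring))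
            (show (0:ℤ) + 1 = 1 by ring)) :
    δ 0 1 F + F.comp β (by ring) - α.comp F (by ring) = 0 := by
  have hδα : δ 1 2 α = zX - α.comp α (by ring) := eq_sub_of_add_eq hα
  have huA : u.comp (h.comp α (show (-1:ℤ)+1=0 by ring)) (by ring)
      = Cochain.ofHom (𝟙 X) - u := by
    rw [Cochain.comp_add, Cochain.comp_id] at hu₂
    exact eq_sub_of_add_eq' hu₂
  have hAu : (h.comp α (show (-1:ℤ)+1=0 by ring)).comp u (by ring)
      = Cochain.ofHom (𝟙 X) - u := by
    rw [Cochain.add_comp, Cochain.id_comp] at hu₁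
    exact eq_sub_of_add_eq' hu₁
  have hvα : v.comp α (show (0:ℤ)+1=1 by ring) = α.comp u (show (1:ℤ)+0=1 by ring) := by
    rw [hv, Cochain.sub_comp, Cochain.id_comp,
      Cochain.comp_assoc α (u.comp h (show (0:ℤ)+(-1)=-1 by ring)) α
        (show (1:ℤ)+(-1)=0 by ring) (show (-1:ℤ)+1=0 by ring) (show (1:ℤ)+(-1)+1=1 by ring),
      Cochain.comp_assoc_of_first_is_zero_cochain, huA, Cochain.comp_sub, Cochain.comp_id]
    abel
  have hδA : δ 0 1 (h.comp α (show (-1:ℤ)+1=0 by ring))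
      = h.comp zX (show (-1:ℤ)+2=1 by ring)
        - h.comp (α.comp α (show (1:ℤ)+1=2 by ring)) (show (-1:ℤ)+2=1 by ring)
        - α + (f.comp g (show (0:ℤ)+0=0 by ring)).comp α (show (0:ℤ)+1=1 by ring)
        + ((h.comp h (show (-1:ℤ)+(-1)=-2 by ring)).comp zX (show (-2:ℤ)+2=0 by ring)).comp α
            (show (0:ℤ)+1=1 by ring) := by
    rw [δ_comp h α (show (-1:ℤ)+1=0 by ring) 0 2 1 (by ring) (by ring) (by ring),
      hδα, hdh, Int.negOnePow_one, Units.neg_smul, one_smul,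
      Cochain.comp_sub, Cochain.sub_comp, Cochain.sub_comp, Cochain.id_comp]
    abel
  have e1 := δ_comp_zero_cochain u (h.comp α (show (-1:ℤ)+1=0 by ring)) 1 (by ring)
  rw [huA, δ_sub, δ_ofHom, zero_sub] at e1
  have e2 := congrArg (fun w => w.comp u (show (1:ℤ)+0=1 by ring)) e1
  simp only [Cochain.add_comp, Cochain.neg_comp,
    Cochain.comp_assoc_of_second_is_zero_cochain, hAu, Cochain.comp_sub, Cochain.comp_id] at e2
  have hδu : δ 0 1 u
      = -((u.comp (δ 0 1 (h.comp α (show (-1:ℤ)+1=0 by ring))) (show (0:ℤ)+1=1 by ring)).comp u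
          (show (1:ℤ)+0=1 by ring)) := by
    linear_combination (norm := abel) -e2
  have hδF := δ_comp_zero_cochain u f 1 (by ring)
  rw [hF, hβ]
  rw [hδF, hdf, hδu, hδA]
  simp only [Cochain.comp_add, Cochain.add_comp, Cochain.comp_sub, Cochain.sub_comp,
    Cochain.neg_comp, Cochain.comp_neg, Cochain.comp_assoc_of_first_is_zero_cochain,
    Cochain.comp_assoc_of_second_is_zero_cochain, Cochain.comp_assoc_of_third_is_zero_cochain]
  -- R1
  have R1 : v.comp (α.comp f (show (1:ℤ)+0=1 by ring)) (show (0:ℤ)+1=1 by ring)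
      = α.comp (u.comp f (show (0:ℤ)+0=0 by ring)) (show (1:ℤ)+0=1 by ring) := by
    have e := congrArg (fun w => w.comp f (show (1:ℤ)+0=1 by ring)) hvα
    simpa only [Cochain.comp_assoc_of_first_is_zero_cochain,
      Cochain.comp_assoc_of_second_is_zero_cochain,
      Cochain.comp_assoc_of_third_is_zero_cochain] using e
  -- R2
  have R2 : u.comp (h.comp (α.comp (α.comp (u.comp f (show (0:ℤ)+0=0 by ring))
        (show (1:ℤ)+0=1 by ring)) (show (1:ℤ)+1=2 by ring)) (show (-1:ℤ)+2=1 by ring))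
        (show (0:ℤ)+1=1 by ring)
      = α.comp (u.comp f (show (0:ℤ)+0=0 by ring)) (show (1:ℤ)+0=1 by ring)
        - u.comp (α.comp (u.comp f (show (0:ℤ)+0=0 by ring)) (show (1:ℤ)+0=1 by ring))
            (show (0:ℤ)+1=1 by ring) := by
    have e := congrArg (fun w => w.comp
      (α.comp (u.comp f (show (0:ℤ)+0=0 by ring)) (show (1:ℤ)+0=1 by ring))
      (show (0:ℤ)+1=1 by ring)) huA
    simp only [Cochain.sub_comp, Cochain.id_comp,
      Cochain.comp_assoc_of_first_is_zero_cochain] at e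
    rw [Cochain.comp_assoc h α
      (α.comp (u.comp f (show (0:ℤ)+0=0 by ring)) (show (1:ℤ)+0=1 by ring))
      (show (-1:ℤ)+1=0 by ring) (show (1:ℤ)+1=2 by ring) (show (-1:ℤ)+1+1=1 by ring)] at e
    exact e
  -- Rb
  have Rb : h.comp (α.comp (u.comp f (show (0:ℤ)+0=0 by ring)) (show (1:ℤ)+0=1 by ring))
        (show (-1:ℤ)+1=0 by ring)
      = f - u.comp f (show (0:ℤ)+0=0 by ring) := by
    have e := congrArg (fun w => w.comp f (show (0:ℤ)+0=0 by ring)) hAu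
    simpa only [Cochain.sub_comp, Cochain.id_comp,
      Cochain.comp_assoc_of_second_is_zero_cochain,
      Cochain.comp_assoc_of_third_is_zero_cochain] using e
  -- Rch
  have Rch : h.comp (zX.comp (α.comp (u.comp f (show (0:ℤ)+0=0 by ring))
        (show (1:ℤ)+0=1 by ring)) (show (2:ℤ)+1=3 by ring)) (show (-1:ℤ)+3=2 by ring)
      = zX.comp (h.comp (α.comp (u.comp f (show (0:ℤ)+0=0 by ring)) (show (1:ℤ)+0=1 by ring))
          (show (-1:ℤ)+1=0 by ring)) (show (2:ℤ)+0=2 by ring) := by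
    rw [← Cochain.comp_assoc h zX
        (α.comp (u.comp f (show (0:ℤ)+0=0 by ring)) (show (1:ℤ)+0=1 by ring))
        (show (-1:ℤ)+2=1 by ring) (show (2:ℤ)+1=3 by ring) (show (-1:ℤ)+2+1=2 by ring),
      hch,
      Cochain.comp_assoc zX h
        (α.comp (u.comp f (show (0:ℤ)+0=0 by ring)) (show (1:ℤ)+0=1 by ring))
        (show (2:ℤ)+(-1)=1 by ring) (show (-1:ℤ)+1=0 by ring) (show (2:ℤ)+(-1)+1=2 by ring)]
  -- R3
  have R3 : u.comp (((h.comp h (show (-1:ℤ)+(-1)=-2 by ring)).comp zX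
        (show (-2:ℤ)+2=0 by ring)).comp (α.comp (u.comp f (show (0:ℤ)+0=0 by ring))
        (show (1:ℤ)+0=1 by ring)) (show (0:ℤ)+1=1 by ring)) (show (0:ℤ)+1=1 by ring)
      = u.comp (h.comp (f.comp zY (show (0:ℤ)+2=2 by ring)) (show (-1:ℤ)+2=1 by ring))
          (show (0:ℤ)+1=1 by ring)
        - u.comp (h.comp (zX.comp (u.comp f (show (0:ℤ)+0=0 by ring)) (show (2:ℤ)+0=2 by ring))
            (show (-1:ℤ)+2=1 by ring)) (show (0:ℤ)+1=1 by ring) := by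
    rw [Cochain.comp_assoc (h.comp h (show (-1:ℤ)+(-1)=-2 by ring)) zX
        (α.comp (u.comp f (show (0:ℤ)+0=0 by ring)) (show (1:ℤ)+0=1 by ring))
        (show (-2:ℤ)+2=0 by ring) (show (2:ℤ)+1=3 by ring) (show (-2:ℤ)+2+1=1 by ring),
      Cochain.comp_assoc h h
        (zX.comp (α.comp (u.comp f (show (0:ℤ)+0=0 by ring)) (show (1:ℤ)+0=1 by ring))
          (show (2:ℤ)+1=3 by ring))
        (show (-1:ℤ)+(-1)=-2 by ring) (show (-1:ℤ)+3=2 by ring) (show (-1:ℤ)+(-1)+3=1 by ring),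
      Rch, Rb]
    simp only [Cochain.comp_sub]
    rw [← hcf]
  rw [R1]
  linear_combination (norm := abel) R2 - R3
end

section
/- (Curved perturbation, H-equation) With z, f, g, h, k a z-homotopy equivalence X ≃ Y, α ∈ End^1(X) with d(α)+α² = z·id_X and id_X + αh invertible, define F := f(id+αh)^{−1}, G := (id+hα)^{−1}g, H := h(id+αh)^{−1}. Then d(H) + α∘H + H∘α = id_X − G∘F. That is, H exhibits G∘F as homotopic to the identity of the curved twisted complex (X, α, z·id_X). -/
open CategoryTheory CochainComplex CochainComplex.HomComplex


private lemma cassoc {R : Type*} [CommRing R] {F G K L : CochainComplex (ModuleCat R) ℤ}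
    {n₁ n₂ n₃ : ℤ} (n₁₂ n₂₃ n₁₂₃ : ℤ) (a : Cochain F G n₁) (b : Cochain G K n₂)
    (c : Cochain K L n₃)
    (h₁₂ : n₁ + n₂ = n₁₂) (h₂₃ : n₂ + n₃ = n₂₃) (h₁ : n₁₂ + n₃ = n₁₂₃)
    (h₂ : n₁ + n₂₃ = n₁₂₃) :
    (a.comp b h₁₂).comp c h₁ = a.comp (b.comp c h₂₃) h₂ := by
  subst h₁₂ h₂₃
  exact Cochain.comp_assoc a b c rfl rfl h₁

/-- curved perturbation, `H`-equation.  With `z, f, g, h, k`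
a `z`-homotopy equivalence `X ≃ Y`, `α ∈ End¹(X)` with `d(α) + α² = z·id_X` and
`id_X + αh` invertible with two-sided inverse `u` (and `v := id − h∘u∘α` the
inverse of `id_X + hα`), define `F := f(id+αh)^{-1}`, `G := (id+hα)^{-1}g`,
`H := h(id+αh)^{-1}`.  Then `d(H) + α∘H + H∘α = id_X − G∘F`: the homotopy `H`
exhibits `G∘F` as homotopic to the identity of the curved twisted complex
`(X, α, z·id_X)`.  (Compositions are written diagrammatically.) -/
theorem curved_perturbation_H_equation
    {R : Type*} [CommRing R]
    (X Y : CochainComplex (ModuleCat R) ℤ)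
    (zX : Cochain X X 2) (zY : Cochain Y Y 2)
    (hzX : δ 2 3 zX = 0) (hzY : δ 2 3 zY = 0)
    (f : Cochain X Y 0) (g : Cochain Y X 0)
    (h : Cochain X X (-1)) (k : Cochain Y Y (-1))
    -- centrality of z
    (hcf : f.comp zY (show (0:ℤ) + 2 = 2 by ring) = zX.comp f (show (2:ℤ) + 0 = 2 by ring))
    (hcg : g.comp zX (show (0:ℤ) + 2 = 2 by ring) = zY.comp g (show (2:ℤ) + 0 = 2 by ring))
    (hch : h.comp zX (show (-1:ℤ) + 2 = 1 by ring) = zX.comp h (show (2:ℤ) + (-1) = 1 by ring))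
    (hck : k.comp zY (show (-1:ℤ) + 2 = 1 by ring) = zY.comp k (show (2:ℤ) + (-1) = 1 by ring))
    -- the z-homotopy-equivalence equations
    (hdf : δ 0 1 f = (h.comp f (show (-1:ℤ) + 0 = -1 by ring)
        - f.comp k (show (0:ℤ) + (-1) = -1 by ring)).comp zY (show (-1:ℤ) + 2 = 1 by ring))
    (hdg : δ 0 1 g = (k.comp g (show (-1:ℤ) + 0 = -1 by ring)
        - g.comp h (show (0:ℤ) + (-1) = -1 by ring)).comp zX (show (-1:ℤ) + 2 = 1 by ring))
    (hdh : δ (-1) 0 h = Cochain.ofHom (𝟙 X) - f.comp g (by ring)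
        - (h.comp h (show (-1:ℤ) + (-1) = -2 by ring)).comp zX (show (-2:ℤ) + 2 = 0 by ring))
    (hdk : δ (-1) 0 k = Cochain.ofHom (𝟙 Y) - g.comp f (by ring)
        - (k.comp k (show (-1:ℤ) + (-1) = -2 by ring)).comp zY (show (-2:ℤ) + 2 = 0 by ring))
    -- the curved Maurer–Cartan endomorphism α and centrality of z w.r.t. α
    (α : Cochain X X 1)
    (hα : δ 1 2 α + α.comp α (by ring) = zX)
    (hcα : α.comp zX (show (1:ℤ) + 2 = 3 by ring) = zX.comp α (show (2:ℤ) + 1 = 3 by ring))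
    -- invertibility of id_X + α∘h
    (u : Cochain X X 0)
    (hu₁ : (Cochain.ofHom (𝟙 X) + h.comp α (by ring)).comp u (by ring) = Cochain.ofHom (𝟙 X))
    (hu₂ : u.comp (Cochain.ofHom (𝟙 X) + h.comp α (by ring)) (by ring) = Cochain.ofHom (𝟙 X))
    (v : Cochain X X 0)
    (hv : v = Cochain.ofHom (𝟙 X)
        - α.comp (u.comp h (show (0:ℤ) + (-1) = -1 by ring)) (show (1:ℤ) + (-1) = 0 by ring))
    (F : Cochain X Y 0) (hF : F = u.comp f (by ring))
    (G : Cochain Y X 0) (hG : G = g.comp v (by ring))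
    (H : Cochain X X (-1)) (hH : H = u.comp h (by ring)) :
    δ (-1) 0 H + H.comp α (by ring) + α.comp H (by ring)
      = Cochain.ofHom (𝟙 X) - F.comp G (by ring) := by
  have hδα : δ 1 2 α = zX - α.comp α (show (1:ℤ) + 1 = 2 by omega) :=
    eq_sub_of_add_eq hα
  have hαu : (h.comp α (show (-1:ℤ) + 1 = 0 by omega)).comp u (show (0:ℤ) + 0 = 0 by omega)
      = Cochain.ofHom (𝟙 X) - u := by
    have h1 := hu₁
    rw [Cochain.add_comp, Cochain.id_comp] at h1
    exact eq_sub_of_add_eq' h1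
  have huα : u.comp (h.comp α (show (-1:ℤ) + 1 = 0 by omega)) (show (0:ℤ) + 0 = 0 by omega)
      = Cochain.ofHom (𝟙 X) - u := by
    have h1 := hu₂
    rw [Cochain.comp_add, Cochain.comp_id] at h1
    exact eq_sub_of_add_eq' h1
  -- z commutes with P := 1 + h⬝α
  have hPz : (Cochain.ofHom (𝟙 X) + h.comp α (show (-1:ℤ) + 1 = 0 by omega)).comp zX
        (show (0:ℤ) + 2 = 2 by omega)
      = zX.comp (Cochain.ofHom (𝟙 X) + h.comp α (show (-1:ℤ) + 1 = 0 by omega))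
        (show (2:ℤ) + 0 = 2 by omega) := by
    rw [Cochain.add_comp, Cochain.comp_add, Cochain.id_comp, Cochain.comp_id,
      cassoc 0 3 2 h α zX (by omega) (by omega) (by omega) (by omega), hcα,
      ← cassoc 1 3 2 h zX α (by omega) (by omega) (by omega) (by omega), hch,
      cassoc 1 0 2 zX h α (by omega) (by omega) (by omega) (by omega)]
  -- z commutes with u
  have huz : u.comp zX (show (0:ℤ) + 2 = 2 by omega)
      = zX.comp u (show (2:ℤ) + 0 = 2 by omega) := by
    calc u.comp zX (show (0:ℤ) + 2 = 2 by omega)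
        = u.comp (zX.comp ((Cochain.ofHom (𝟙 X)
            + h.comp α (show (-1:ℤ) + 1 = 0 by omega)).comp u (show (0:ℤ) + 0 = 0 by omega))
            (show (2:ℤ) + 0 = 2 by omega)) (show (0:ℤ) + 2 = 2 by omega) := by
          rw [hu₁, Cochain.comp_id]
      _ = (u.comp (Cochain.ofHom (𝟙 X) + h.comp α (show (-1:ℤ) + 1 = 0 by omega))
            (show (0:ℤ) + 0 = 0 by omega)).comp
            (zX.comp u (show (2:ℤ) + 0 = 2 by omega)) (show (0:ℤ) + 2 = 2 by omega) := by
          rw [← cassoc 2 0 2 zX (Cochain.ofHom (𝟙 X)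
              + h.comp α (show (-1:ℤ) + 1 = 0 by omega)) u
              (by omega) (by omega) (by omega) (by omega), ← hPz,
            cassoc 2 2 2 (Cochain.ofHom (𝟙 X) + h.comp α (show (-1:ℤ) + 1 = 0 by omega)) zX u
              (by omega) (by omega) (by omega) (by omega),
            ← cassoc 0 2 2 u (Cochain.ofHom (𝟙 X) + h.comp α (show (-1:ℤ) + 1 = 0 by omega))
              (zX.comp u (show (2:ℤ) + 0 = 2 by omega))
              (by omega) (by omega) (by omega) (by omega)]
      _ = zX.comp u (show (2:ℤ) + 0 = 2 by omega) := by
          rw [hu₂, Cochain.id_comp]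
  -- z commutes with H
  have hzH : zX.comp H (show (2:ℤ) + (-1) = 1 by omega)
      = H.comp zX (show (-1:ℤ) + 2 = 1 by omega) := by
    rw [hH, ← cassoc 2 (-1) 1 zX u h (by omega) (by omega) (by omega) (by omega), ← huz,
      cassoc 2 1 1 u zX h (by omega) (by omega) (by omega) (by omega), ← hch,
      ← cassoc (-1) 1 1 u h zX (by omega) (by omega) (by omega) (by omega)]
  -- z commutes past α⬝H
  have hzαH : zX.comp (α.comp H (show (1:ℤ) + (-1) = 0 by omega)) (show (2:ℤ) + 0 = 2 by omega)
      = α.comp (H.comp zX (show (-1:ℤ) + 2 = 1 by omega)) (show (1:ℤ) + 1 = 2 by omega) := by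
    rw [← cassoc 3 0 2 zX α H (by omega) (by omega) (by omega) (by omega), ← hcα,
      cassoc 3 1 2 α zX H (by omega) (by omega) (by omega) (by omega), hzH]
  -- H⬝α = 1 - u
  have hHα : H.comp α (show (-1:ℤ) + 1 = 0 by omega) = Cochain.ofHom (𝟙 X) - u := by
    rw [hH, cassoc (-1) 0 0 u h α (by omega) (by omega) (by omega) (by omega), huα]
  -- right-associated form of dh
  have hdh' : δ (-1) 0 h = Cochain.ofHom (𝟙 X) - f.comp g (show (0:ℤ) + 0 = 0 by omega)
      - h.comp (h.comp zX (show (-1:ℤ) + 2 = 1 by omega)) (show (-1:ℤ) + 1 = 0 by omega) := by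
    rw [hdh, cassoc (-2) 1 0 h h zX (by omega) (by omega) (by omega) (by omega)]
  -- δ of A := h⬝α, fully expanded
  have hW : δ 0 1 (h.comp α (show (-1:ℤ) + 1 = 0 by omega))
      = h.comp zX (show (-1:ℤ) + 2 = 1 by omega)
        - h.comp (α.comp α (show (1:ℤ) + 1 = 2 by omega)) (show (-1:ℤ) + 2 = 1 by omega)
        - α + (f.comp g (show (0:ℤ) + 0 = 0 by omega)).comp α (show (0:ℤ) + 1 = 1 by omega)
        + (h.comp (h.comp zX (show (-1:ℤ) + 2 = 1 by omega))
            (show (-1:ℤ) + 1 = 0 by omega)).comp α (show (0:ℤ) + 1 = 1 by omega) := by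
    rw [δ_comp h α (show (-1:ℤ) + 1 = 0 by omega) 0 2 1 (by omega) (by omega) (by omega),
      hδα, hdh', Int.negOnePow_one, Units.neg_smul, one_smul,
      Cochain.comp_sub, Cochain.sub_comp, Cochain.sub_comp, Cochain.id_comp]
    abel
  -- δu = -(u⬝(δA))⬝u
  have hδu : δ 0 1 u
      = -((u.comp (δ 0 1 (h.comp α (show (-1:ℤ) + 1 = 0 by omega)))
          (show (0:ℤ) + 1 = 1 by omega)).comp u (show (1:ℤ) + 0 = 1 by omega)) := by
    have e0 := δ_comp u (Cochain.ofHom (𝟙 X) + h.comp α (show (-1:ℤ) + 1 = 0 by omega))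
      (show (0:ℤ) + 0 = 0 by omega) 1 1 1 (by omega) (by omega) (by omega)
    rw [hu₂, δ_ofHom, Int.negOnePow_zero, one_smul, δ_add, δ_ofHom, zero_add] at e0
    have e1 : (δ 0 1 u).comp (Cochain.ofHom (𝟙 X)
        + h.comp α (show (-1:ℤ) + 1 = 0 by omega)) (show (1:ℤ) + 0 = 1 by omega)
        = -(u.comp (δ 0 1 (h.comp α (show (-1:ℤ) + 1 = 0 by omega)))
            (show (0:ℤ) + 1 = 1 by omega)) := by
      rw [neg_eq_of_add_eq_zero_right e0.symm]
    calc δ 0 1 u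
        = (δ 0 1 u).comp ((Cochain.ofHom (𝟙 X)
            + h.comp α (show (-1:ℤ) + 1 = 0 by omega)).comp u (show (0:ℤ) + 0 = 0 by omega))
            (show (1:ℤ) + 0 = 1 by omega) := by rw [hu₁, Cochain.comp_id]
      _ = ((δ 0 1 u).comp (Cochain.ofHom (𝟙 X)
            + h.comp α (show (-1:ℤ) + 1 = 0 by omega)) (show (1:ℤ) + 0 = 1 by omega)).comp u
            (show (1:ℤ) + 0 = 1 by omega) := by
          rw [cassoc 1 0 1 (δ 0 1 u) (Cochain.ofHom (𝟙 X)
            + h.comp α (show (-1:ℤ) + 1 = 0 by omega)) u (by omega) (by omega)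
            (by omega) (by omega)]
      _ = -((u.comp (δ 0 1 (h.comp α (show (-1:ℤ) + 1 = 0 by omega)))
            (show (0:ℤ) + 1 = 1 by omega)).comp u (show (1:ℤ) + 0 = 1 by omega)) := by
          rw [e1, Cochain.neg_comp]
  -- δH
  have hδH : δ (-1) 0 H = u.comp (δ (-1) 0 h) (show (0:ℤ) + 0 = 0 by omega)
      - (δ 0 1 u).comp h (show (1:ℤ) + (-1) = 0 by omega) := by
    rw [hH]
    refine (δ_comp u h (show (0:ℤ) + (-1) = -1 by omega) 1 0 0 (by omega) (by omega)
      (by omega)).trans ?_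
    rw [(Int.negOnePow_neg 1).trans Int.negOnePow_one, Units.neg_smul, one_smul]
    abel
  -- word reductions
  have w1 : (u.comp (h.comp zX (show (-1:ℤ) + 2 = 1 by omega))
        (show (0:ℤ) + 1 = 1 by omega)).comp H (show (1:ℤ) + (-1) = 0 by omega)
      = H.comp (H.comp zX (show (-1:ℤ) + 2 = 1 by omega)) (show (-1:ℤ) + 1 = 0 by omega) := by
    rw [← cassoc (-1) 1 1 u h zX (by omega) (by omega) (by omega) (by omega), ← hH,
      cassoc 1 1 0 H zX H (by omega) (by omega) (by omega) (by omega), hzH]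
  have w2 : (u.comp (h.comp (α.comp α (show (1:ℤ) + 1 = 2 by omega))
        (show (-1:ℤ) + 2 = 1 by omega)) (show (0:ℤ) + 1 = 1 by omega)).comp H
        (show (1:ℤ) + (-1) = 0 by omega)
      = α.comp H (show (1:ℤ) + (-1) = 0 by omega)
        - u.comp (α.comp H (show (1:ℤ) + (-1) = 0 by omega)) (show (0:ℤ) + 0 = 0 by omega) := by
    rw [← cassoc 0 2 1 h α α (by omega) (by omega) (by omega) (by omega),
      ← cassoc 0 1 1 u (h.comp α (show (-1:ℤ) + 1 = 0 by omega)) α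
        (by omega) (by omega) (by omega) (by omega), huα,
      Cochain.sub_comp, Cochain.id_comp, Cochain.sub_comp,
      cassoc 1 0 0 u α H (by omega) (by omega) (by omega) (by omega)]
  have w3 : (u.comp α (show (0:ℤ) + 1 = 1 by omega)).comp H (show (1:ℤ) + (-1) = 0 by omega)
      = u.comp (α.comp H (show (1:ℤ) + (-1) = 0 by omega)) (show (0:ℤ) + 0 = 0 by omega) :=
    cassoc 1 0 0 u α H (by omega) (by omega) (by omega) (by omega)
  have w4 : (u.comp ((f.comp g (show (0:ℤ) + 0 = 0 by omega)).comp α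
        (show (0:ℤ) + 1 = 1 by omega)) (show (0:ℤ) + 1 = 1 by omega)).comp H
        (show (1:ℤ) + (-1) = 0 by omega)
      = u.comp ((f.comp g (show (0:ℤ) + 0 = 0 by omega)).comp
          (α.comp H (show (1:ℤ) + (-1) = 0 by omega)) (show (0:ℤ) + 0 = 0 by omega))
          (show (0:ℤ) + 0 = 0 by omega) := by
    rw [cassoc 1 0 0 u ((f.comp g (show (0:ℤ) + 0 = 0 by omega)).comp α
        (show (0:ℤ) + 1 = 1 by omega)) H (by omega) (by omega) (by omega) (by omega),
      cassoc 1 0 0 (f.comp g (show (0:ℤ) + 0 = 0 by omega)) α H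
        (by omega) (by omega) (by omega) (by omega)]
  have w5 : (u.comp ((h.comp (h.comp zX (show (-1:ℤ) + 2 = 1 by omega))
        (show (-1:ℤ) + 1 = 0 by omega)).comp α (show (0:ℤ) + 1 = 1 by omega))
        (show (0:ℤ) + 1 = 1 by omega)).comp H (show (1:ℤ) + (-1) = 0 by omega)
      = u.comp (h.comp (h.comp zX (show (-1:ℤ) + 2 = 1 by omega))
          (show (-1:ℤ) + 1 = 0 by omega)) (show (0:ℤ) + 0 = 0 by omega)
        - H.comp (H.comp zX (show (-1:ℤ) + 2 = 1 by omega))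
            (show (-1:ℤ) + 1 = 0 by omega) := by
    have inner2 : (h.comp zX (show (-1:ℤ) + 2 = 1 by omega)).comp
        (α.comp H (show (1:ℤ) + (-1) = 0 by omega)) (show (1:ℤ) + 0 = 1 by omega)
        = (h.comp α (show (-1:ℤ) + 1 = 0 by omega)).comp
            (H.comp zX (show (-1:ℤ) + 2 = 1 by omega)) (show (0:ℤ) + 1 = 1 by omega) := by
      rw [cassoc 1 2 1 h zX (α.comp H (show (1:ℤ) + (-1) = 0 by omega))
          (by omega) (by omega) (by omega) (by omega), hzαH,
        ← cassoc 0 2 1 h α (H.comp zX (show (-1:ℤ) + 2 = 1 by omega))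
          (by omega) (by omega) (by omega) (by omega)]
    have inner3 : (h.comp α (show (-1:ℤ) + 1 = 0 by omega)).comp
        (H.comp zX (show (-1:ℤ) + 2 = 1 by omega)) (show (0:ℤ) + 1 = 1 by omega)
        = ((h.comp α (show (-1:ℤ) + 1 = 0 by omega)).comp u (show (0:ℤ) + 0 = 0 by omega)).comp
            (h.comp zX (show (-1:ℤ) + 2 = 1 by omega)) (show (0:ℤ) + 1 = 1 by omega) := by
      conv_lhs => rw [hH]
      rw [cassoc (-1) 1 1 u h zX (by omega) (by omega) (by omega) (by omega),
        ← cassoc 0 1 1 (h.comp α (show (-1:ℤ) + 1 = 0 by omega)) u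
          (h.comp zX (show (-1:ℤ) + 2 = 1 by omega)) (by omega) (by omega) (by omega) (by omega)]
    rw [cassoc 1 0 0 u ((h.comp (h.comp zX (show (-1:ℤ) + 2 = 1 by omega))
        (show (-1:ℤ) + 1 = 0 by omega)).comp α (show (0:ℤ) + 1 = 1 by omega)) H
        (by omega) (by omega) (by omega) (by omega),
      cassoc 1 0 0 (h.comp (h.comp zX (show (-1:ℤ) + 2 = 1 by omega))
        (show (-1:ℤ) + 1 = 0 by omega)) α H (by omega) (by omega) (by omega) (by omega),
      cassoc 0 1 0 h (h.comp zX (show (-1:ℤ) + 2 = 1 by omega))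
        (α.comp H (show (1:ℤ) + (-1) = 0 by omega)) (by omega) (by omega) (by omega) (by omega),
      inner2, inner3, hαu, Cochain.sub_comp, Cochain.id_comp, Cochain.comp_sub,
      Cochain.comp_sub,
      ← cassoc (-1) 0 0 u h (u.comp (h.comp zX (show (-1:ℤ) + 2 = 1 by omega))
        (show (0:ℤ) + 1 = 1 by omega)) (by omega) (by omega) (by omega) (by omega), ← hH,
      ← cassoc (-1) 1 1 u h zX (by omega) (by omega) (by omega) (by omega), ← hH]
  -- F⬝G expanded
  have hFG : F.comp G (show (0:ℤ) + 0 = 0 by omega)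
      = u.comp (f.comp g (show (0:ℤ) + 0 = 0 by omega)) (show (0:ℤ) + 0 = 0 by omega)
        - u.comp ((f.comp g (show (0:ℤ) + 0 = 0 by omega)).comp
            (α.comp H (show (1:ℤ) + (-1) = 0 by omega)) (show (0:ℤ) + 0 = 0 by omega))
            (show (0:ℤ) + 0 = 0 by omega) := by
    rw [hF, hG, hv, ← hH,
      cassoc 0 0 0 u f (g.comp (Cochain.ofHom (𝟙 X) - α.comp H
        (show (1:ℤ) + (-1) = 0 by omega)) (show (0:ℤ) + 0 = 0 by omega))
        (by omega) (by omega) (by omega) (by omega),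
      ← cassoc 0 0 0 f g (Cochain.ofHom (𝟙 X) - α.comp H (show (1:ℤ) + (-1) = 0 by omega))
        (by omega) (by omega) (by omega) (by omega),
      Cochain.comp_sub, Cochain.comp_id, Cochain.comp_sub]
  -- final assembly
  rw [hδH, hδu, Cochain.neg_comp,
    cassoc 1 (-1) 0 (u.comp (δ 0 1 (h.comp α (show (-1:ℤ) + 1 = 0 by omega)))
      (show (0:ℤ) + 1 = 1 by omega)) u h (by omega) (by omega) (by omega) (by omega),
    ← hH, hW, hdh', hHα, hFG]
  simp only [Cochain.comp_sub, Cochain.comp_add, Cochain.sub_comp, Cochain.add_comp,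
    Cochain.comp_id]
  rw [w1, w2, w3, w4, w5]
  abel
end

section
/- (Curved perturbation, curvature of β) With z, f, g, h, k a z-homotopy equivalence X ≃ Y, α ∈ End^1(X) with d(α)+α² = z·id_X and id_X + αh invertible, define Θ := α(id+hα)^{−1} and β := z·k + f∘Θ∘g. Then d(β) + β² = z·id_Y, i.e., (Y, β, z·id_Y) is a curved twisted complex with curvature z. -/
open CategoryTheory CochainComplex CochainComplex.HomComplex

/-- curved perturbation, curvature of `β`.  With `z, f, g, h, k`
a `z`-homotopy equivalence `X ≃ Y`, `α ∈ End¹(X)` with `d(α) + α² = z·id_X` and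
`id_X + αh` invertible with two-sided inverse `u` (and `v := id − h∘u∘α` the
inverse of `id_X + hα`), define `Θ := α(id + hα)^{-1}` and `β := z·k + f∘Θ∘g`.
Then `d(β) + β² = z·id_Y`, i.e. `(Y, β, z·id_Y)` is a curved twisted complex with
curvature `z`.  (Compositions are written diagrammatically.) -/
theorem curved_perturbation_curvature_of_beta
    {R : Type*} [CommRing R]
    (X Y : CochainComplex (ModuleCat R) ℤ)
    (zX : Cochain X X 2) (zY : Cochain Y Y 2)
    (hzX : δ 2 3 zX = 0) (hzY : δ 2 3 zY = 0)
    (f : Cochain X Y 0) (g : Cochain Y X 0)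
    (h : Cochain X X (-1)) (k : Cochain Y Y (-1))
    -- centrality of z
    (hcf : f.comp zY (show (0:ℤ) + 2 = 2 by ring) = zX.comp f (show (2:ℤ) + 0 = 2 by ring))
    (hcg : g.comp zX (show (0:ℤ) + 2 = 2 by ring) = zY.comp g (show (2:ℤ) + 0 = 2 by ring))
    (hch : h.comp zX (show (-1:ℤ) + 2 = 1 by ring) = zX.comp h (show (2:ℤ) + (-1) = 1 by ring))
    (hck : k.comp zY (show (-1:ℤ) + 2 = 1 by ring) = zY.comp k (show (2:ℤ) + (-1) = 1 by ring))
    -- the z-homotopy-equivalence equations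
    (hdf : δ 0 1 f = (h.comp f (show (-1:ℤ) + 0 = -1 by ring)
        - f.comp k (show (0:ℤ) + (-1) = -1 by ring)).comp zY (show (-1:ℤ) + 2 = 1 by ring))
    (hdg : δ 0 1 g = (k.comp g (show (-1:ℤ) + 0 = -1 by ring)
        - g.comp h (show (0:ℤ) + (-1) = -1 by ring)).comp zX (show (-1:ℤ) + 2 = 1 by ring))
    (hdh : δ (-1) 0 h = Cochain.ofHom (𝟙 X) - f.comp g (by ring)
        - (h.comp h (show (-1:ℤ) + (-1) = -2 by ring)).comp zX (show (-2:ℤ) + 2 = 0 by ring))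
    (hdk : δ (-1) 0 k = Cochain.ofHom (𝟙 Y) - g.comp f (by ring)
        - (k.comp k (show (-1:ℤ) + (-1) = -2 by ring)).comp zY (show (-2:ℤ) + 2 = 0 by ring))
    -- the curved Maurer–Cartan endomorphism α and centrality of z w.r.t. α
    (α : Cochain X X 1)
    (hα : δ 1 2 α + α.comp α (by ring) = zX)
    (hcα : α.comp zX (show (1:ℤ) + 2 = 3 by ring) = zX.comp α (show (2:ℤ) + 1 = 3 by ring))
    -- invertibility of id_X + α∘h
    (u : Cochain X X 0)
    (hu₁ : (Cochain.ofHom (𝟙 X) + h.comp α (by ring)).comp u (by ring) = Cochain.ofHom (𝟙 X))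
    (hu₂ : u.comp (Cochain.ofHom (𝟙 X) + h.comp α (by ring)) (by ring) = Cochain.ofHom (𝟙 X))
    (v : Cochain X X 0)
    (hv : v = Cochain.ofHom (𝟙 X)
        - α.comp (u.comp h (show (0:ℤ) + (-1) = -1 by ring)) (show (1:ℤ) + (-1) = 0 by ring))
    (Θ : Cochain X X 1) (hΘ : Θ = v.comp α (by ring))
    (β : Cochain Y Y 1)
    (hβ : β = k.comp zY (show (-1:ℤ) + 2 = 1 by ring)
        + g.comp (Θ.comp f (show (1:ℤ) + 0 = 1 by ring)) (show (0:ℤ) + 1 = 1 by ring)) :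
    δ 1 2 β + β.comp β (by ring) = zY := by

  -- abbreviation lemmas
  have huhα : u.comp (h.comp α (by norm_num : (-1:ℤ)+1=0)) (zero_add 0)
      = Cochain.ofHom (𝟙 X) - u := by
    rw [Cochain.comp_add, Cochain.comp_id] at hu₂
    exact eq_sub_of_add_eq' hu₂
  have hhαu : (h.comp α (by norm_num : (-1:ℤ)+1=0)).comp u (add_zero 0)
      = Cochain.ofHom (𝟙 X) - u := by
    rw [Cochain.add_comp, Cochain.id_comp] at hu₁
    exact eq_sub_of_add_eq' hu₁
  have hΘ2 : v.comp α (zero_add 1) = α.comp u (add_zero 1) := by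
    rw [hv, Cochain.sub_comp, Cochain.id_comp,
      Cochain.comp_assoc α (u.comp h (by norm_num : (0:ℤ)+(-1)=-1)) α
        (by norm_num : (1:ℤ)+(-1)=0) (by norm_num : (-1:ℤ)+1=0) (by norm_num : (1:ℤ)+(-1)+1=1),
      Cochain.comp_assoc u h α (by norm_num : (0:ℤ)+(-1)=-1) (by norm_num : (-1:ℤ)+1=0)
        (by norm_num : (0:ℤ)+(-1)+1=0),
      huhα, Cochain.comp_sub, Cochain.comp_id]
    abel
  have hαuh : α.comp (u.comp h (by norm_num : (0:ℤ)+(-1)=-1)) (by norm_num : (1:ℤ)+(-1)=0)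
      = Cochain.ofHom (𝟙 X) - v := by
    rw [hv]; abel
  have TLA : ∀ (Z : CochainComplex (ModuleCat R) ℤ) (x : Cochain X Z 2),
      α.comp (u.comp (h.comp x (by norm_num : (-1:ℤ)+2=1)) (zero_add 1))
        (by norm_num : (1:ℤ)+1=2) = x - v.comp x (zero_add 2) := by
    intro Z x
    rw [← Cochain.comp_assoc u h x (by norm_num : (0:ℤ)+(-1)=-1) (by norm_num : (-1:ℤ)+2=1)
        (by norm_num : (-1:ℤ)+2=1),
      ← Cochain.comp_assoc α (u.comp h (by norm_num : (0:ℤ)+(-1)=-1)) x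
        (by norm_num : (1:ℤ)+(-1)=0) (by norm_num : (-1:ℤ)+2=1) (by norm_num : (0:ℤ)+2=2),
      hαuh, Cochain.sub_comp, Cochain.id_comp]
  have TLH : ∀ (Z : CochainComplex (ModuleCat R) ℤ) (x : Cochain X Z 2),
      h.comp (α.comp (u.comp x (zero_add 2)) (by norm_num : (1:ℤ)+2=3))
        (by norm_num : (-1:ℤ)+3=2) = x - u.comp x (zero_add 2) := by
    intro Z x
    rw [← Cochain.comp_assoc α u x (add_zero 1) (zero_add 2) (by norm_num : (1:ℤ)+2=3),
      ← Cochain.comp_assoc h (α.comp u (add_zero 1)) x (by norm_num : (-1:ℤ)+1=0)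
        (by norm_num : (1:ℤ)+2=3) (by norm_num : (0:ℤ)+2=2),
      ← Cochain.comp_assoc h α u (by norm_num : (-1:ℤ)+1=0) (add_zero 1)
        (by norm_num : (0:ℤ)+0=0),
      hhαu, Cochain.sub_comp, Cochain.id_comp]
  have TLB : ∀ (y : Cochain X X 1),
      α.comp (u.comp y (zero_add 1)) (by norm_num : (1:ℤ)+1=2)
        = v.comp (α.comp y (by norm_num : (1:ℤ)+1=2)) (zero_add 2) := by
    intro y
    rw [← Cochain.comp_assoc α u y (add_zero 1) (zero_add 1) (by norm_num : (1:ℤ)+1=2),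
      ← Cochain.comp_assoc v α y (zero_add 1) (by norm_num : (1:ℤ)+1=2)
        (by norm_num : (1:ℤ)+1=2), hΘ2]

  -- centrality of z with respect to u
  have hwz : (Cochain.ofHom (𝟙 X) + h.comp α (by norm_num : (-1:ℤ)+1=0)).comp zX (zero_add 2)
      = zX.comp (Cochain.ofHom (𝟙 X) + h.comp α (by norm_num : (-1:ℤ)+1=0)) (add_zero 2) := by
    rw [Cochain.add_comp, Cochain.comp_add, Cochain.id_comp, Cochain.comp_id,
      Cochain.comp_assoc h α zX (by norm_num : (-1:ℤ)+1=0) (by norm_num : (1:ℤ)+2=3)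
        (by norm_num : (0:ℤ)+2=2), hcα,
      ← Cochain.comp_assoc h zX α (by norm_num : (-1:ℤ)+2=1) (by norm_num : (2:ℤ)+1=3)
        (by norm_num : (1:ℤ)+1=2), hch,
      Cochain.comp_assoc zX h α (by norm_num : (2:ℤ)+(-1)=1) (by norm_num : (-1:ℤ)+1=0)
        (by norm_num : (1:ℤ)+1=2)]
  have huz : u.comp zX (zero_add 2) = zX.comp u (add_zero 2) := by
    have e1 : zX.comp ((Cochain.ofHom (𝟙 X) + h.comp α (by norm_num : (-1:ℤ)+1=0)).comp u
        (add_zero 0)) (add_zero 2) = zX := by rw [hu₁, Cochain.comp_id]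
    calc u.comp zX (zero_add 2)
        = u.comp (zX.comp ((Cochain.ofHom (𝟙 X) + h.comp α (by norm_num : (-1:ℤ)+1=0)).comp u
            (add_zero 0)) (add_zero 2)) (zero_add 2) := by rw [e1]
      _ = u.comp ((zX.comp (Cochain.ofHom (𝟙 X) + h.comp α (by norm_num : (-1:ℤ)+1=0))
            (add_zero 2)).comp u (add_zero 2)) (zero_add 2) := by
          rw [Cochain.comp_assoc zX (Cochain.ofHom (𝟙 X) + h.comp α (by norm_num : (-1:ℤ)+1=0)) u
            (add_zero 2) (add_zero 0) (add_zero 2)]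
      _ = u.comp (((Cochain.ofHom (𝟙 X) + h.comp α (by norm_num : (-1:ℤ)+1=0)).comp zX
            (zero_add 2)).comp u (add_zero 2)) (zero_add 2) := by rw [hwz]
      _ = (u.comp (Cochain.ofHom (𝟙 X) + h.comp α (by norm_num : (-1:ℤ)+1=0))
            (add_zero 0)).comp (zX.comp u (add_zero 2)) (zero_add 2) := by
          rw [Cochain.comp_assoc (Cochain.ofHom (𝟙 X) + h.comp α (by norm_num : (-1:ℤ)+1=0)) zX u
              (zero_add 2) (add_zero 2) (add_zero 2),
            ← Cochain.comp_assoc u (Cochain.ofHom (𝟙 X) + h.comp α (by norm_num : (-1:ℤ)+1=0))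
              (zX.comp u (add_zero 2)) (add_zero 0) (zero_add 2) (zero_add 2)]
      _ = zX.comp u (add_zero 2) := by rw [hu₂, Cochain.id_comp]
  have TLuz : ∀ (Z : CochainComplex (ModuleCat R) ℤ) (x : Cochain X Z 0),
      zX.comp (u.comp x (zero_add 0)) (add_zero 2)
        = u.comp (zX.comp x (add_zero 2)) (zero_add 2) := by
    intro Z x
    rw [← Cochain.comp_assoc zX u x (add_zero 2) (zero_add 0) (add_zero 2), ← huz,
      Cochain.comp_assoc u zX x (zero_add 2) (add_zero 2) (add_zero 2)]
  have TLαz : ∀ (Z : CochainComplex (ModuleCat R) ℤ) (x : Cochain X Z 0),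
      zX.comp (α.comp x (add_zero 1)) (by norm_num : (2:ℤ)+1=3)
        = α.comp (zX.comp x (add_zero 2)) (by norm_num : (1:ℤ)+2=3) := by
    intro Z x
    rw [← Cochain.comp_assoc zX α x (by norm_num : (2:ℤ)+1=3) (add_zero 1)
        (by norm_num : (3:ℤ)+0=3), ← hcα,
      Cochain.comp_assoc α zX x (by norm_num : (1:ℤ)+2=3) (add_zero 2)
        (by norm_num : (3:ℤ)+0=3)]
  have TLgz : ∀ (x : Cochain X Y 1),
      zY.comp (g.comp x (zero_add 1)) (by norm_num : (2:ℤ)+1=3)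
        = g.comp (zX.comp x (by norm_num : (2:ℤ)+1=3)) (zero_add 3) := by
    intro x
    rw [← Cochain.comp_assoc zY g x (add_zero 2) (zero_add 1) (by norm_num : (2:ℤ)+1=3), ← hcg,
      Cochain.comp_assoc g zX x (zero_add 2) (by norm_num : (2:ℤ)+1=3) (by norm_num : (2:ℤ)+1=3)]
  have TLkz : ∀ (x : Cochain Y Y 2),
      zY.comp (k.comp x (by norm_num : (-1:ℤ)+2=1)) (by norm_num : (2:ℤ)+1=3)
        = k.comp (zY.comp x (by norm_num : (2:ℤ)+2=4)) (by norm_num : (-1:ℤ)+4=3) := by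
    intro x
    rw [← Cochain.comp_assoc zY k x (by norm_num : (2:ℤ)+(-1)=1) (by norm_num : (-1:ℤ)+2=1)
        (by norm_num : (1:ℤ)+2=3), ← hck,
      Cochain.comp_assoc k zY x (by norm_num : (-1:ℤ)+2=1) (by norm_num : (2:ℤ)+2=4)
        (by norm_num : (1:ℤ)+2=3)]

  have hδα : δ 1 2 α = zX - α.comp α (by norm_num : (1:ℤ)+1=2) := eq_sub_of_add_eq hα
  have hδw : δ 0 1 (h.comp α (by norm_num : (-1:ℤ)+1=0))
      = h.comp (δ 1 2 α) (by norm_num : (-1:ℤ)+2=1)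
        - (δ (-1) 0 h).comp α (by norm_num : (0:ℤ)+1=1) := by
    rw [δ_comp h α (by norm_num : (-1:ℤ)+1=0) 0 2 1 (by norm_num) (by norm_num) (by norm_num)]
    simp only [Int.negOnePow_one, Units.neg_smul, one_smul, sub_eq_add_neg]
  have hδu : δ 0 1 u
      = -(u.comp ((δ 0 1 (h.comp α (by norm_num : (-1:ℤ)+1=0))).comp u (add_zero 1))
          (zero_add 1)) := by
    have e0 := congrArg (δ 0 1) hu₁
    rw [δ_ofHom, δ_zero_cochain_comp _ _ _ (by norm_num), δ_add, δ_ofHom, zero_add,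
      Int.negOnePow_zero, one_smul] at e0
    have e1 : (Cochain.ofHom (𝟙 X) + h.comp α (by norm_num : (-1:ℤ)+1=0)).comp (δ 0 1 u)
        (zero_add 1) = -((δ 0 1 (h.comp α (by norm_num : (-1:ℤ)+1=0))).comp u (add_zero 1)) := by
      rw [eq_comm, neg_eq_iff_add_eq_zero, add_comm]; exact e0
    calc δ 0 1 u = (Cochain.ofHom (𝟙 X)).comp (δ 0 1 u) (zero_add 1) := by
          rw [Cochain.id_comp]
      _ = (u.comp (Cochain.ofHom (𝟙 X) + h.comp α (by norm_num : (-1:ℤ)+1=0))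
            (add_zero 0)).comp (δ 0 1 u) (zero_add 1) := by rw [hu₂]
      _ = u.comp ((Cochain.ofHom (𝟙 X) + h.comp α (by norm_num : (-1:ℤ)+1=0)).comp (δ 0 1 u)
            (zero_add 1)) (zero_add 1) := by
          rw [Cochain.comp_assoc u (Cochain.ofHom (𝟙 X) + h.comp α (by norm_num : (-1:ℤ)+1=0))
            (δ 0 1 u) (add_zero 0) (zero_add 1) (zero_add 1)]
      _ = -(u.comp ((δ 0 1 (h.comp α (by norm_num : (-1:ℤ)+1=0))).comp u (add_zero 1))
            (zero_add 1)) := by rw [e1, Cochain.comp_neg]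

  have hΘau : Θ = α.comp u (add_zero 1) := by rw [hΘ]; exact hΘ2
  have hδΘ : δ 1 2 (α.comp u (add_zero 1)) = u.comp zX (zero_add 2) + v.comp zX (zero_add 2) - zX
      - α.comp (u.comp (f.comp (g.comp (α.comp u (add_zero 1)) (zero_add 1)) (zero_add 1))
          (zero_add 1)) (by norm_num : (1:ℤ)+1=2) := by
    rw [δ_comp_zero_cochain α u 2 rfl, hδu, hδw, hδα, hdh]
    simp only [Cochain.comp_sub, Cochain.comp_add, Cochain.sub_comp, Cochain.add_comp,
      Cochain.comp_neg, Cochain.neg_comp, Cochain.comp_id, Cochain.id_comp,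
      Cochain.comp_assoc_of_first_is_zero_cochain, Cochain.comp_assoc_of_second_is_zero_cochain,
      Cochain.comp_assoc_of_third_is_zero_cochain]
    rw [Cochain.comp_assoc (h.comp h (by norm_num : (-1:ℤ)+(-1)=-2)) zX
        (α.comp u (add_zero 1)) (by norm_num : (-2:ℤ)+2=0) (by norm_num : (2:ℤ)+1=3)
        (by norm_num : (0:ℤ)+1=1),
      Cochain.comp_assoc h h (zX.comp (α.comp u (add_zero 1)) (by norm_num : (2:ℤ)+1=3))
        (by norm_num : (-1:ℤ)+(-1)=-2) (by norm_num : (-1:ℤ)+3=2) (by norm_num : (-2:ℤ)+3=1),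
      TLαz X u, ← huz, TLA X (u.comp zX (zero_add 2)),
      TLA X (α.comp (α.comp u (add_zero 1)) (by norm_num : (1:ℤ)+1=2)),
      TLA X (h.comp (α.comp (u.comp zX (zero_add 2)) (by norm_num : (1:ℤ)+2=3))
        (by norm_num : (-1:ℤ)+3=2)),
      TLB (α.comp u (add_zero 1)), TLH X zX]
    simp only [Cochain.comp_sub]
    abel

  have hnop2 : Int.negOnePow 2 = 1 := Int.negOnePow_even 2 ⟨1, by norm_num⟩
  rw [hβ, hΘau, δ_add,
    δ_comp k zY (by norm_num : (-1:ℤ)+2=1) 0 3 2 (by norm_num) (by norm_num) (by norm_num),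
    δ_zero_cochain_comp g ((α.comp u (add_zero 1)).comp f (by norm_num : (1:ℤ)+0=1)) 2
      (by norm_num),
    δ_comp_zero_cochain (α.comp u (add_zero 1)) f 2 (by norm_num),
    hzY, hdk, hdg, hdf, hδΘ]
  simp only [Cochain.comp_zero, zero_add, hnop2, Int.negOnePow_one, Units.neg_smul, one_smul,
    Cochain.comp_sub, Cochain.comp_add, Cochain.sub_comp, Cochain.add_comp,
    Cochain.comp_neg, Cochain.neg_comp, Cochain.comp_id, Cochain.id_comp,
    Cochain.comp_assoc_of_first_is_zero_cochain, Cochain.comp_assoc_of_second_is_zero_cochain,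
    Cochain.comp_assoc_of_third_is_zero_cochain]
  rw [Cochain.comp_assoc (k.comp k (by norm_num : (-1:ℤ)+(-1)=-2)) zY zY
      (by norm_num : (-2:ℤ)+2=0) (by norm_num : (2:ℤ)+2=4) (by norm_num : (0:ℤ)+2=2),
    Cochain.comp_assoc k k (zY.comp zY (by norm_num : (2:ℤ)+2=4))
      (by norm_num : (-1:ℤ)+(-1)=-2) (by norm_num : (-1:ℤ)+4=3) (by norm_num : (-2:ℤ)+4=2),
    Cochain.comp_assoc k (g.comp zX (zero_add 2))
      (α.comp (u.comp f (zero_add 0)) (add_zero 1)) (by norm_num : (-1:ℤ)+2=1)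
      (by norm_num : (2:ℤ)+1=3) (by norm_num : (1:ℤ)+1=2),
    Cochain.comp_assoc_of_first_is_zero_cochain g zX
      (α.comp (u.comp f (zero_add 0)) (add_zero 1)) (by norm_num : (2:ℤ)+1=3),
    Cochain.comp_assoc h zX (α.comp (u.comp f (zero_add 0)) (add_zero 1))
      (by norm_num : (-1:ℤ)+2=1) (by norm_num : (2:ℤ)+1=3) (by norm_num : (1:ℤ)+1=2),
    Cochain.comp_assoc k zY (k.comp zY (by norm_num : (-1:ℤ)+2=1))
      (by norm_num : (-1:ℤ)+2=1) (by norm_num : (2:ℤ)+1=3) (by norm_num : (1:ℤ)+1=2),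
    Cochain.comp_assoc k zY (g.comp (α.comp (u.comp f (zero_add 0)) (add_zero 1)) (zero_add 1))
      (by norm_num : (-1:ℤ)+2=1) (by norm_num : (2:ℤ)+1=3) (by norm_num : (1:ℤ)+1=2),
    hcf, TLkz zY, TLgz (α.comp (u.comp f (zero_add 0)) (add_zero 1)),
    TLαz Y (u.comp f (zero_add 0)), TLuz Y f,
    TLA Y (zX.comp f (add_zero 2)), TLH Y (zX.comp f (add_zero 2))]
  simp only [Cochain.comp_sub, Cochain.comp_add]
  abel
end
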